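/- Fix indices p > q > r > s in {1, …, N} and consider the 16 N-qubit Pauli strings obtained by choosing either X or Y at each of the four positions p, q, r, s, placing Z at every position strictly between q and p and at every position strictly between s and r, and I at all remaining positions. The minimum number of parts in a partition of these 16 strings into families of pairwise commuting strings is exactly 2: the 8 strings with an even number of Y-choices form one pairwise-commuting family and the 8 strings with an odd number of Y-choices form another, while no single pairwise-commuting family contains all 16 strings. -/

import Mathlib

open Matrix Finset

inductive Pauli : Type
  | I | X | Y | Z
  deriving DecidableEq

instance : Fintype Pauli :=
  ⟨{Pauli.I, Pauli.X, Pauli.Y, Pauli.Z}, fun x => by cases x <;> simp⟩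

noncomputable def Pauli.mat : Pauli → Matrix (Fin 2) (Fin 2) ℂ
  | .I => 1
  | .X => !![0, 1; 1, 0]
  | .Y => !![0, -Complex.I; Complex.I, 0]
  | .Z => !![1, 0; 0, -1]

/-- An `N`-qubit Pauli string: a function from qubit indices to single-qubit Paulis. -/
abbrev PauliString (N : ℕ) := Fin N → Pauli

/-- The `2^N × 2^N` matrix of a Pauli string, as the tensor (Kronecker) product of its
entries, with rows/columns indexed by `Fin N → Fin 2`. -/
noncomputable def Pmat {N : ℕ} (A : PauliString N) :
    Matrix (Fin N → Fin 2) (Fin N → Fin 2) ℂ :=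
  Matrix.of fun x y => ∏ j, (A j).mat (x j) (y j)

/-- The Jordan-Wigner Pauli string of a double excitation operator `a†_p a†_q a_r a_s`
(with `p > q > r > s`), determined by a choice `b : Fin 4 → Bool` of `X` (false) or
`Y` (true) at each of the four positions `p, q, r, s`; `Z` is placed at every position
strictly between `q` and `p` and strictly between `s` and `r`, and `I` elsewhere. -/
def jwString (N : ℕ) (p q r s : Fin N) (b : Fin 4 → Bool) : PauliString N := fun j =>
  if j = p then (if b 0 then Pauli.Y else Pauli.X)
  else if j = q then (if b 1 then Pauli.Y else Pauli.X)
  else if j = r then (if b 2 then Pauli.Y else Pauli.X)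
  else if j = s then (if b 3 then Pauli.Y else Pauli.X)
  else if (q < j ∧ j < p) ∨ (s < j ∧ j < r) then Pauli.Z
  else Pauli.I

/-- Number of `Y` choices in a selection `b : Fin 4 → Bool`. -/
def yCount (b : Fin 4 → Bool) : ℕ := (Finset.univ.filter fun i => b i = true).card

/-- `P` is a partition of the finite set `T` of Pauli strings into families of pairwise
commuting strings. -/
def IsCommPartition {N : ℕ} (T : Finset (PauliString N))
    (P : Finset (Finset (PauliString N))) : Prop :=
  (∀ S ∈ P, S.Nonempty) ∧
  (P : Set (Finset (PauliString N))).PairwiseDisjoint id ∧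
  P.sup id = T ∧
  ∀ S ∈ P, ∀ A ∈ S, ∀ B ∈ S, Pmat A * Pmat B = Pmat B * Pmat A

/-!
Single-qubit Paulis either commute or anticommute, so two Pauli strings commute exactly when
they anticommute at an even number of qubits. Two Jordan-Wigner strings of the same excitation
agree away from `p, q, r, s`, where both carry `X` or `Y`; hence they anticommute exactly at
the positions where their `X`/`Y` choices differ, and the number of those has the parity of the
sum of their `Y`-counts. So strings whose `Y`-counts have equal parity commute, while `XXXX`
and `YXXX` anticommute and cannot share a family.
-/

def Pauli.Anticommute (a b : Pauli) : Prop := a ≠ .I ∧ b ≠ .I ∧ a ≠ b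

instance : DecidableRel Pauli.Anticommute := fun _ _ => inferInstanceAs (Decidable (_ ∧ _ ∧ _))

lemma Pauli.not_anticommute_self (a : Pauli) : ¬ a.Anticommute a := fun h => h.2.2 rfl

lemma Pauli.mat_mul_comm (a b : Pauli) :
    a.mat * b.mat = (if a.Anticommute b then -1 else 1 : ℂ) • (b.mat * a.mat) := by
  cases a <;> cases b <;>
  · ext i j
    fin_cases i <;> fin_cases j <;>
      simp [Pauli.mat, Pauli.Anticommute, Matrix.mul_apply, Fin.sum_univ_two]

lemma Pauli.mat_mul_self (a : Pauli) : a.mat * a.mat = 1 := by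
  cases a <;>
  · ext i j
    fin_cases i <;> fin_cases j <;>
      simp [Pauli.mat, Matrix.mul_apply, Fin.sum_univ_two, Matrix.one_apply]

lemma Pauli.anticommute_ite_iff (u v : Bool) :
    (if u then Pauli.Y else .X).Anticommute (if v then .Y else .X) ↔ u ≠ v := by
  cases u <;> cases v <;> decide

section PauliString

variable {N : ℕ}

def anticommCount (A B : PauliString N) : ℕ := #{j | (A j).Anticommute (B j)}

lemma Pmat_mul_Pmat (A B : PauliString N) :
    Pmat A * Pmat B = Matrix.of fun x y => ∏ j, ((A j).mat * (B j).mat) (x j) (y j) := by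
  ext x y
  simp only [Pmat, Matrix.of_apply, Matrix.mul_apply, ← Finset.prod_mul_distrib]
  rw [Finset.prod_univ_sum, Fintype.piFinset_univ]

lemma Pmat_mul_self (A : PauliString N) : Pmat A * Pmat A = 1 := by
  ext x y
  simp only [Pmat_mul_Pmat, Matrix.of_apply, Pauli.mat_mul_self, Matrix.one_apply]
  by_cases h : x = y
  · simp [h]
  · obtain ⟨j, hj⟩ := Function.ne_iff.mp h
    rw [if_neg h]
    exact Finset.prod_eq_zero (Finset.mem_univ j) (if_neg hj)

lemma Pmat_mul_comm (A B : PauliString N) :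
    Pmat A * Pmat B = (-1 : ℂ) ^ anticommCount A B • (Pmat B * Pmat A) := by
  have hsign : ∏ j, (if (A j).Anticommute (B j) then -1 else 1 : ℂ) =
      (-1) ^ anticommCount A B := by
    rw [Finset.prod_ite, Finset.prod_const, Finset.prod_const_one, mul_one]
    rfl
  ext x y
  simp only [Pmat_mul_Pmat, Matrix.of_apply, Matrix.smul_apply, smul_eq_mul, ← hsign,
    ← Finset.prod_mul_distrib, Pauli.mat_mul_comm (A _) (B _)]

theorem Pmat_commute_iff (A B : PauliString N) :
    Commute (Pmat A) (Pmat B) ↔ Even (anticommCount A B) := by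
  refine ⟨fun hcomm => ?_, fun heven => by
    rw [Commute, SemiconjBy, Pmat_mul_comm, heven.neg_one_pow, one_smul]⟩
  by_contra hodd
  have hanti : Pmat A * Pmat B = -(Pmat B * Pmat A) := by
    rw [Pmat_mul_comm, (Nat.not_even_iff_odd.mp hodd).neg_one_pow, neg_one_smul]
  have hzero : Pmat B * Pmat A = 0 := by
    rw [hcomm.eq] at hanti
    ext x y
    exact self_eq_neg.mp (congrFun (congrFun hanti x) y)
  have hone : Pmat B * Pmat A * (Pmat A * Pmat B) = 1 := by
    rw [mul_assoc, ← mul_assoc (Pmat A), Pmat_mul_self, one_mul, Pmat_mul_self]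
  rw [hzero, zero_mul] at hone
  exact zero_ne_one hone

lemma anticommCount_eq_card_of_eq_off_range {ι : Type*} [Fintype ι] {f : ι → Fin N}
    (hf : Function.Injective f) {A B : PauliString N}
    (hAB : ∀ j, (∀ i, f i ≠ j) → A j = B j) :
    anticommCount A B = #{i | (A (f i)).Anticommute (B (f i))} := by
  refine (Finset.card_bij (fun i _ => f i) (by simp) (fun _ _ _ _ h => hf h) ?_).symm
  intro j hj
  by_contra! hout
  simp only [Finset.mem_filter, Finset.mem_univ, true_and] at hj hout
  exact Pauli.not_anticommute_self _ (hAB j (fun i hi => hout i (hi ▸ hj) hi) ▸ hj)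

end PauliString

section JordanWigner

variable {N : ℕ} {p q r s : Fin N}

lemma jwString_apply_pos (hpos : Function.Injective ![p, q, r, s]) (b : Fin 4 → Bool)
    (i : Fin 4) : jwString N p q r s b (![p, q, r, s] i) = if b i then .Y else .X := by
  have hqp : q ≠ p := hpos.ne (a₁ := 1) (a₂ := 0) (by decide)
  have hrp : r ≠ p := hpos.ne (a₁ := 2) (a₂ := 0) (by decide)
  have hsp : s ≠ p := hpos.ne (a₁ := 3) (a₂ := 0) (by decide)
  have hrq : r ≠ q := hpos.ne (a₁ := 2) (a₂ := 1) (by decide)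
  have hsq : s ≠ q := hpos.ne (a₁ := 3) (a₂ := 1) (by decide)
  have hsr : s ≠ r := hpos.ne (a₁ := 3) (a₂ := 2) (by decide)
  fin_cases i <;> simp [jwString, hqp, hrp, hsp, hrq, hsq, hsr]

lemma jwString_apply_of_ne (b b' : Fin 4 → Bool) {j : Fin N}
    (hj : ∀ i, ![p, q, r, s] i ≠ j) : jwString N p q r s b j = jwString N p q r s b' j := by
  have hp : j ≠ p := (hj 0).symm
  have hq : j ≠ q := (hj 1).symm
  have hr : j ≠ r := (hj 2).symm
  have hs : j ≠ s := (hj 3).symm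
  simp [jwString, hp, hq, hr, hs]

lemma jwString_injective (hpos : Function.Injective ![p, q, r, s]) :
    Function.Injective (jwString N p q r s) := by
  intro b b' h
  funext i
  have := congrFun h (![p, q, r, s] i)
  rw [jwString_apply_pos hpos, jwString_apply_pos hpos] at this
  cases hb : b i <;> cases hb' : b' i <;> simp_all

lemma anticommCount_jwString (hpos : Function.Injective ![p, q, r, s]) (b b' : Fin 4 → Bool) :
    anticommCount (jwString N p q r s b) (jwString N p q r s b') = #{i | b i ≠ b' i} := by
  rw [anticommCount_eq_card_of_eq_off_range hpos fun _ => jwString_apply_of_ne b b']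
  simp only [jwString_apply_pos hpos, Pauli.anticommute_ite_iff]

lemma even_card_ne_iff_even_yCount_iff (b b' : Fin 4 → Bool) :
    Even #{i | b i ≠ b' i} ↔ (Even (yCount b) ↔ Even (yCount b')) := by
  revert b b'
  decide

theorem jwString_commute_iff (hpos : Function.Injective ![p, q, r, s]) (b b' : Fin 4 → Bool) :
    Commute (Pmat (jwString N p q r s b)) (Pmat (jwString N p q r s b')) ↔
      (Even (yCount b) ↔ Even (yCount b')) := by
  rw [Pmat_commute_iff, anticommCount_jwString hpos, even_card_ne_iff_even_yCount_iff]

end JordanWigner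

section CommPartition

variable {N : ℕ}

lemma IsCommPartition.two_le_card {T : Finset (PauliString N)}
    {P : Finset (Finset (PauliString N))} (hP : IsCommPartition T P) {A B : PauliString N}
    (hA : A ∈ T) (hB : B ∈ T) (hAB : ¬ Commute (Pmat A) (Pmat B)) : 2 ≤ P.card := by
  by_contra! hlt
  rw [← hP.2.2.1] at hA hB
  obtain ⟨S, hS, hAS⟩ := Finset.mem_sup.mp hA
  obtain ⟨S', hS', hBS'⟩ := Finset.mem_sup.mp hB
  obtain rfl := Finset.card_le_one.mp (by omega) S hS S' hS'
  exact hAB (hP.2.2.2 S hS A hAS B hBS')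

lemma isCommPartition_pair {T S₁ S₂ : Finset (PauliString N)} (h₁ : S₁.Nonempty)
    (h₂ : S₂.Nonempty) (hdisj : Disjoint S₁ S₂) (hunion : S₁ ∪ S₂ = T)
    (hcomm₁ : ∀ A ∈ S₁, ∀ B ∈ S₁, Commute (Pmat A) (Pmat B))
    (hcomm₂ : ∀ A ∈ S₂, ∀ B ∈ S₂, Commute (Pmat A) (Pmat B)) :
    IsCommPartition T {S₁, S₂} := by
  refine ⟨?_, ?_, by simpa using hunion, ?_⟩
  · simp [h₁, h₂]
  · rw [Finset.coe_pair]
    exact Set.pairwise_pair.mpr fun _ => ⟨hdisj, hdisj.symm⟩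
  · simp only [Finset.mem_insert, Finset.mem_singleton]
    rintro S (rfl | rfl)
    exacts [hcomm₁, hcomm₂]

lemma isCommPartition_image_filter {α : Type*} [Fintype α] {f : α → PauliString N}
    (hf : Function.Injective f) (c : α → Prop) [DecidablePred c]
    (hcomm : ∀ a b, (c a ↔ c b) → Commute (Pmat (f a)) (Pmat (f b)))
    {a₀ a₁ : α} (h₀ : c a₀) (h₁ : ¬ c a₁) :
    IsCommPartition (Finset.univ.image f)
        {(Finset.univ.filter c).image f, (Finset.univ.filter fun a => ¬ c a).image f} ∧
      ({(Finset.univ.filter c).image f, (Finset.univ.filter fun a => ¬ c a).image f} :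
        Finset (Finset (PauliString N))).card = 2 := by
  have hne₀ : ((Finset.univ.filter c).image f).Nonempty :=
    ⟨f a₀, by simpa using ⟨a₀, h₀, rfl⟩⟩
  have hne₁ : ((Finset.univ.filter fun a => ¬ c a).image f).Nonempty :=
    ⟨f a₁, by simpa using ⟨a₁, h₁, rfl⟩⟩
  have hdisj := (Finset.disjoint_image hf).mpr
    (Finset.disjoint_filter_filter_not Finset.univ Finset.univ c)
  refine ⟨isCommPartition_pair hne₀ hne₁ hdisj ?_ ?_ ?_,
    Finset.card_pair (hdisj.ne hne₀.ne_empty)⟩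
  · classical
    rw [← Finset.image_union, Finset.filter_union_filter_not_eq]
  all_goals
    simp only [Finset.mem_image, Finset.mem_filter, Finset.mem_univ, true_and]
    rintro _ ⟨a, ha, rfl⟩ _ ⟨b, hb, rfl⟩
    exact hcomm a b (by tauto)

end CommPartition

/-- The minimum number of parts in a partition of the 16 Jordan-Wigner strings of
`a†_p a†_q a_r a_s` into pairwise-commuting families is exactly 2: the 8 strings with an
even number of `Y` choices and the 8 strings with an odd number of `Y` choices form such
a partition, while no single pairwise-commuting family contains all 16 strings. -/
theorem jw_min_commuting_partition {N : ℕ} (p q r s : Fin N)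
    (hpq : q < p) (hqr : r < q) (hrs : s < r) :
    IsLeast {k | ∃ P, IsCommPartition (Finset.univ.image (jwString N p q r s)) P ∧
        P.card = k} 2 ∧
    (let evenFam := (Finset.univ.filter fun b => Even (yCount b)).image (jwString N p q r s)
     let oddFam := (Finset.univ.filter fun b => ¬ Even (yCount b)).image (jwString N p q r s)
     evenFam.card = 8 ∧ oddFam.card = 8 ∧
       IsCommPartition (Finset.univ.image (jwString N p q r s)) {evenFam, oddFam} ∧
       ({evenFam, oddFam} : Finset (Finset (PauliString N))).card = 2) ∧
    ¬ ∀ b b' : Fin 4 → Bool,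
        Pmat (jwString N p q r s b) * Pmat (jwString N p q r s b') =
          Pmat (jwString N p q r s b') * Pmat (jwString N p q r s b) := by
  have hpos : Function.Injective ![p, q, r, s] :=
    StrictAnti.injective <| Fin.strictAnti_iff_succ_lt.mpr fun i => by
      fin_cases i <;> assumption
  have hinj := jwString_injective hpos
  have hanti : ¬ Commute (Pmat (jwString N p q r s ![false, false, false, false]))
      (Pmat (jwString N p q r s ![true, false, false, false])) := by
    rw [jwString_commute_iff hpos]
    decide
  obtain ⟨hpart, hcard⟩ := isCommPartition_image_filter hinj (fun b => Even (yCount b))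
    (fun b b' => (jwString_commute_iff hpos b b').mpr)
    (a₀ := ![false, false, false, false]) (a₁ := ![true, false, false, false])
    (by decide) (by decide)
  refine ⟨⟨⟨_, hpart, hcard⟩, ?_⟩, ⟨?_, ?_, hpart, hcard⟩, fun h => hanti (h _ _)⟩
  · rintro k ⟨P, hP, rfl⟩
    exact hP.two_le_card (Finset.mem_image_of_mem _ (Finset.mem_univ _))
      (Finset.mem_image_of_mem _ (Finset.mem_univ _)) hanti
  all_goals rw [Finset.card_image_of_injective _ hinj]; decide
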